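/- arXiv:2511.08209 — 2 statements merged into one kernel-verified Lean document; each statement's English description precedes it below -/
import Mathlib

section
/- Comparison identity between the Dirac and Laplace quadratic forms: Let q : ℝ^d → (Hermitian n×n matrices) be bounded measurable, z ∈ ℂ, and Ξ ∈ C²(ℝ^d; ℝ). Then for every u ∈ C_c^∞(ℝ^d; ℂ^n): Σ_{j=1}^d ⟨p_ju, Ξp_ju⟩ = ⟨(z − q)u, Ξ(z − q)u⟩ − Im⟨u, α_j(∂_jΞ)(z − q)u⟩ + (1/2)⟨u, (ΔΞ)u⟩ + 2Re⟨(z − q)u, Ξ(H − z)u⟩ + Re⟨u, iα_j(∂_jΞ)(H − z)u⟩ + ⟨(H − z)u, Ξ(H − z)u⟩, where (z − q)u denotes x ↦ (zI_n − q(x))u(x) and all pairings are L² inner products. -/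
open MeasureTheory Filter Topology Complex
open scoped ENNReal

noncomputable section

abbrev Ed (d : ℕ) := EuclideanSpace ℝ (Fin d)
abbrev Vn (n : ℕ) := EuclideanSpace ℂ (Fin n)
abbrev Opn (n : ℕ) := Vn n →L[ℂ] Vn n

variable {d n : ℕ}

/-- The modified radius `f`. -/
def fmod (χ : ℝ → ℝ) (x : Ed d) : ℝ := χ ‖x‖ + ‖x‖ * (1 - χ ‖x‖)

/-- Partial derivative in the `j`-th coordinate direction. -/
def pder {F : Type*} [NormedAddCommGroup F] [NormedSpace ℝ F]
    (j : Fin d) (g : Ed d → F) (x : Ed d) : F :=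
  fderiv ℝ g x (EuclideanSpace.single j 1)

/-- Radial derivative `∂_f g = Σ_j (∂_j f)(∂_j g)`. -/
def fder {F : Type*} [NormedAddCommGroup F] [NormedSpace ℝ F]
    (χ : ℝ → ℝ) (g : Ed d → F) (x : Ed d) : F :=
  ∑ j, pder j (fmod χ) x • pder j g x

/-- `p_j u = -i ∂_j u`. -/
def pj (j : Fin d) (u : Ed d → Vn n) (x : Ed d) : Vn n :=
  (-Complex.I) • pder j u x

/-- `p_f u = -i ∂_f u`. -/
def pf (χ : ℝ → ℝ) (u : Ed d → Vn n) (x : Ed d) : Vn n :=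
  (-Complex.I) • fder χ u x

/-- `α_f = Σ_j (∂_j f) α_j`. -/
def alphaF (α : Fin d → Opn n) (χ : ℝ → ℝ) (x : Ed d) : Opn n :=
  ∑ j, ((pder j (fmod χ) x : ℝ) : ℂ) • α j

/-- Laplacian of a real valued function. -/
def lapl (g : Ed d → ℝ) (x : Ed d) : ℝ := ∑ j, pder j (fun y => pder j g y) x

/-- The Dirac operator `H = α_j p_j + q`. -/
def dirac (α : Fin d → Opn n) (q : Ed d → Opn n) (u : Ed d → Vn n) (x : Ed d) : Vn n :=
  (∑ j, α j (pj j u x)) + q x (u x)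

/-- `(H - z)u`. -/
def diracz (α : Fin d → Opn n) (q : Ed d → Opn n) (z : ℂ) (u : Ed d → Vn n) (x : Ed d) : Vn n :=
  dirac α q u x - z • u x

/-- The conjugate operator `A_Θ u = 2Θ p_f u − i(∂_fΘ)u − i(Δf)Θ u`. -/
def AConj (χ : ℝ → ℝ) (Θ : Ed d → ℝ) (u : Ed d → Vn n) (x : Ed d) : Vn n :=
  (2 * Θ x) • pf χ u x - Complex.I • (fder χ Θ x • u x)
    - Complex.I • ((lapl (fmod χ) x * Θ x) • u x)

/-- The `L²` inner ℂ product, conjugate linear in the first entry. -/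
def l2inner (u v : Ed d → Vn n) : ℂ := ∫ x, (inner ℂ (u x) (v x) : ℂ)

/-- `(H − z)φ = ψ` in the distributional sense. -/
def IsDistribSol (α : Fin d → Opn n) (q : Ed d → Opn n) (z : ℂ)
    (φ ψ : Ed d → Vn n) : Prop :=
  ∀ g : Ed d → Vn n, ContDiff ℝ (⊤ : ℕ∞) g → HasCompactSupport g →
    ∫ x, (inner ℂ ((∑ j, α j (pj j g x)) + q x (g x) - (starRingEnd ℂ z) • g x) (φ x) : ℂ)
      = ∫ x, (inner ℂ (g x) (ψ x) : ℂ)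

/-- `ψ` is the distributional `j`-th partial derivative of `φ`. -/
def IsWeakPartialDeriv (j : Fin d) (φ ψ : Ed d → Vn n) : Prop :=
  ∀ g : Ed d → ℂ, ContDiff ℝ (⊤ : ℕ∞) g → HasCompactSupport g →
    ∫ x, pder j g x • φ x = - ∫ x, g x • ψ x

/-- The dyadic annulus `{2^ν ≤ f < 2^(ν+1)}`. -/
def annulus (χ : ℝ → ℝ) (ν : ℕ) : Set (Ed d) :=
  {x | 2 ^ ν ≤ fmod χ x ∧ fmod χ x < 2 ^ (ν + 1)}

/-- `L²` norm over a set, valued in `ℝ≥0∞`. -/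
def l2On (S : Set (Ed d)) (ψ : Ed d → Vn n) : ℝ≥0∞ :=
  (∫⁻ x in S, (‖ψ x‖₊ : ℝ≥0∞) ^ 2) ^ (1/2 : ℝ)

/-- The Agmon–Hörmander `B`-norm. -/
def bNorm (χ : ℝ → ℝ) (ψ : Ed d → Vn n) : ℝ≥0∞ :=
  ∑' ν : ℕ, (2 : ℝ≥0∞) ^ ((ν : ℝ) / 2) * l2On (annulus χ ν) ψ

/-- The Agmon–Hörmander `B*`-norm. -/
def bstarNorm (χ : ℝ → ℝ) (ψ : Ed d → Vn n) : ℝ≥0∞ :=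
  ⨆ ν : ℕ, (2 : ℝ≥0∞) ^ (-(ν : ℝ) / 2) * l2On (annulus χ ν) ψ

/-- Membership in `B*₀`. -/
def MemBstar0 (χ : ℝ → ℝ) (ψ : Ed d → Vn n) : Prop :=
  bstarNorm χ ψ < ⊤ ∧
    Tendsto (fun ν : ℕ => (2 : ℝ≥0∞) ^ (-(ν : ℝ) / 2) * l2On (annulus χ ν) ψ)
      atTop (𝓝 0)

/-- The weighted `L²_s` norm `‖f^s ψ‖_{L²}`. -/
def l2w (χ : ℝ → ℝ) (s : ℝ) (ψ : Ed d → Vn n) : ℝ≥0∞ :=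
  (∫⁻ x, (ENNReal.ofReal (fmod χ x ^ s) * (‖ψ x‖₊ : ℝ≥0∞)) ^ 2) ^ (1/2 : ℝ)

/-- Largest eigenvalue (Rayleigh sup) of an operator. -/
def lamMax {n : ℕ} (T : Opn n) : ℝ :=
  ⨆ v : {v : Vn n // ‖v‖ = 1}, ((inner ℂ (v : Vn n) (T (v : Vn n)) : ℂ)).re

/-- Smallest eigenvalue (Rayleigh inf) of an operator. -/
def lamMin {n : ℕ} (T : Opn n) : ℝ :=
  ⨅ v : {v : Vn n // ‖v‖ = 1}, ((inner ℂ (v : Vn n) (T (v : Vn n)) : ℂ)).re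

/-- `m₊ = limsup_{|x|→∞} λ_max(q₀(x))`. -/
def mPlus (q0 : Ed d → Opn n) : ℝ :=
  Filter.limsup (fun x => lamMax (q0 x)) (Filter.comap (fun x : Ed d => ‖x‖) Filter.atTop)

/-- `m₋ = liminf_{|x|→∞} λ_min(q₀(x))`. -/
def mMinus (q0 : Ed d → Opn n) : ℝ :=
  Filter.liminf (fun x => lamMin (q0 x)) (Filter.comap (fun x : Ed d => ‖x‖) Filter.atTop)

/-- Assumption (A1). -/
structure A1 (d n : ℕ) (α : Fin d → Opn n) (χ : ℝ → ℝ)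
    (q0 q1 q2 : Ed d → Opn n) (ρ : ℝ) : Prop where
  hd : 0 < d
  hn : 0 < n
  alpha_sa : ∀ j, ∀ v w : Vn n, (inner ℂ (α j v) w : ℂ) = inner ℂ v (α j w)
  anticomm : ∀ j k, α j ∘L α k + α k ∘L α j = if j = k then (2 : ℂ) • (1 : Opn n) else 0
  chi_smooth : ContDiff ℝ (⊤ : ℕ∞) χ
  chi_one : ∀ t : ℝ, t ≤ 1 → χ t = 1
  chi_zero : ∀ t : ℝ, 2 ≤ t → χ t = 0
  chi_deriv_nonpos : ∀ t : ℝ, deriv χ t ≤ 0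
  q0_c1 : ContDiff ℝ 1 q0
  q1_c1 : ContDiff ℝ 1 q1
  q0_bdd : ∃ C, ∀ x, ‖q0 x‖ ≤ C
  q1_bdd : ∃ C, ∀ x, ‖q1 x‖ ≤ C
  q2_meas : AEStronglyMeasurable q2 volume
  q2_bdd : ∃ C, ∀ x, ‖q2 x‖ ≤ C
  q0_sa : ∀ x, ∀ v w : Vn n, (inner ℂ (q0 x v) w : ℂ) = inner ℂ v (q0 x w)
  q1_sa : ∀ x, ∀ v w : Vn n, (inner ℂ (q1 x v) w : ℂ) = inner ℂ v (q1 x w)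
  q2_sa : ∀ x, ∀ v w : Vn n, (inner ℂ (q2 x v) w : ℂ) = inner ℂ v (q2 x w)
  tilde_eq : ∀ x, ∀ j k : Fin d, α j ∘L q0 x ∘L α j = α k ∘L q0 x ∘L α k
  rho_pos : 0 < ρ
  rho_le_one : ρ ≤ 1
  decay : ∃ C > 0, ∀ x,
    ‖q1 x‖ ≤ C * fmod χ x ^ (-(1 + ρ) / 2) ∧
    (∑ j, ‖pder j q0 x‖) + ‖fder χ q1 x‖ + ‖q2 x‖ ≤ C * fmod χ x ^ (-(1 + ρ))

/-- Assumption (A2). -/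
structure A2 (d n : ℕ) (α : Fin d → Opn n) (χ : ℝ → ℝ)
    (q0 q1 q2 : Ed d → Opn n) (ρ : ℝ) extends A1 d n α χ q0 q1 q2 ρ : Prop where
  massless : ∃ qt : Ed d → Opn n, (∀ x, ∀ j : Fin d, α j ∘L q0 x ∘L α j = qt x) ∧
    ∃ C' ≥ 0, ∀ x,
      ‖(q0 x + qt x) ∘L q1 x - q1 x ∘L (q0 x + qt x)‖ ≤ C' * fmod χ x ^ (-(1 + ρ)) ∧
      ‖q0 x - qt x‖ ≤ C' * fmod χ x ^ (-ρ)

/-- Smooth cutoffs `χ̄_a`, `χ_b`, `χ_{a,b}`. -/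
def chibar (χ : ℝ → ℝ) (a : ℕ) (x : Ed d) : ℝ := 1 - χ (fmod χ x / 2 ^ a)

def chilo (χ : ℝ → ℝ) (b : ℕ) (x : Ed d) : ℝ := χ (fmod χ x / 2 ^ b)

def chiab (χ : ℝ → ℝ) (a b : ℕ) (x : Ed d) : ℝ := chibar χ a x * chilo χ b x

/-- The exponent `θ = 2κf + 2μ∫₀^f (1+τ/2^ν)^{-1-δ} dτ`, as a function of `t = f`. -/
def thetaW (κ μ δ : ℝ) (ν : ℕ) (t : ℝ) : ℝ :=
  2 * κ * t + 2 * μ * ∫ s in (0:ℝ)..t, (1 + s / 2 ^ ν) ^ (-1 - δ)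

/-- The LAP weight `θ_ν = δ⁻¹(1 − (1 + t/2^ν)^{−δ})`. -/
def thetaNu (δ : ℝ) (ν : ℕ) (t : ℝ) : ℝ := δ⁻¹ * (1 - (1 + t / 2 ^ ν) ^ (-δ))

/-- The projection `(1 + s α_f)/2` for a real sign coefficient `s`. -/
def piProj (α : Fin d → Opn n) (χ : ℝ → ℝ) (s : ℝ) (x : Ed d) : Opn n :=
  ((1 : ℝ)/2) • ((1 : Opn n) + s • alphaF α χ x)

section DLCaux

variable {F : Type*} [NormedAddCommGroup F] [NormedSpace ℝ F]

lemma pder_contDiff {g : Ed d → F} {m k : WithTop ℕ∞} (hg : ContDiff ℝ k g)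
    (hmk : m + 1 ≤ k) (j : Fin d) : ContDiff ℝ m (pder j g) := by
  have h := (ContinuousLinearMap.apply ℝ F (EuclideanSpace.single j 1)).contDiff.comp
    (hg.fderiv_right hmk)
  simp only [Function.comp_def] at h
  exact h

lemma pder_zero_of_nmem {g : Ed d → F} {x : Ed d} (hx : x ∉ tsupport g) (j : Fin d) :
    pder j g x = 0 := by
  have : fderiv ℝ g x = 0 := fderiv_of_notMem_tsupport _ hx
  simp [pder, this]

lemma pder_pder_eq {g : Ed d → F} (hg : ContDiff ℝ 2 g) (j k : Fin d) (x : Ed d) :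
    pder j (pder k g) x
      = fderiv ℝ (fderiv ℝ g) x (EuclideanSpace.single j 1) (EuclideanSpace.single k 1) := by
  have hdg : Differentiable ℝ (fderiv ℝ g) :=
    (hg.fderiv_right (m := 1) (by norm_num)).differentiable one_ne_zero
  show fderiv ℝ (fun y => fderiv ℝ g y (EuclideanSpace.single k 1)) x _ = _
  rw [show (fun y => fderiv ℝ g y (EuclideanSpace.single k 1))
      = (ContinuousLinearMap.apply ℝ F (EuclideanSpace.single k 1)) ∘ (fderiv ℝ g) from rfl,
    fderiv_comp x (ContinuousLinearMap.differentiableAt _) (hdg x),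
    ContinuousLinearMap.fderiv]
  rfl

lemma pder_comm {g : Ed d → F} (hg : ContDiff ℝ 2 g) (j k : Fin d) (x : Ed d) :
    pder j (pder k g) x = pder k (pder j g) x := by
  rw [pder_pder_eq hg, pder_pder_eq hg]
  exact hg.contDiffAt.isSymmSndFDerivAt (by simp) _ _

lemma integral_pder_eq_zero {G : Ed d → ℂ} (hG : ContDiff ℝ 1 G)
    (hGs : HasCompactSupport G) (j : Fin d) :
    ∫ x, pder j G x = 0 := by
  set v : Ed d := EuclideanSpace.single j 1
  have hdF_cont : Continuous fun x => fderiv ℝ G x v :=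
    (hG.continuous_fderiv one_ne_zero).clm_apply continuous_const
  have hdF_supp : HasCompactSupport fun x => fderiv ℝ G x v := hGs.fderiv_apply ℝ v
  have h1 : Integrable (fun x => (fun _ : Ed d => (1:ℂ)) x * fderiv ℝ G x v) := by
    simpa using hdF_cont.integrable_of_hasCompactSupport hdF_supp
  have h2 : Integrable (fun x => fderiv ℝ (fun _ : Ed d => (1:ℂ)) x v * G x) := by
    simp [fderiv_const]
  have h3 : Integrable (fun x => (fun _ : Ed d => (1:ℂ)) x * G x) := by
    simpa using hG.continuous.integrable_of_hasCompactSupport hGs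
  have := integral_mul_fderiv_eq_neg_fderiv_mul_of_integrable h2 h1 h3
    (fun x _ => differentiableAt_const _) (fun x _ => hG.differentiable one_ne_zero x)
  simpa [fderiv_const, pder] using this

lemma integ_bdd_supp {f : Ed d → ℂ} (hf : AEStronglyMeasurable f volume)
    {K : Set (Ed d)} (hK : IsCompact K) {C : ℝ} (hb : ∀ x ∈ K, ‖f x‖ ≤ C)
    (h0 : ∀ x ∉ K, f x = 0) : Integrable f volume := by
  have hind : Integrable (K.indicator fun _ => C) volume := by
    rw [integrable_indicator_iff hK.measurableSet]
    exact integrableOn_const hK.measure_lt_top.ne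
  refine hind.mono' hf (Filter.Eventually.of_forall fun x => ?_)
  by_cases hx : x ∈ K
  · simpa [Set.indicator_of_mem hx] using hb x hx
  · simp [Set.indicator_of_notMem hx, h0 x hx]

lemma integ_cont_supp {f : Ed d → ℂ} (hf : Continuous f)
    {K : Set (Ed d)} (hK : IsCompact K) (h0 : ∀ x ∉ K, f x = 0) :
    Integrable f volume :=
  hf.integrable_of_hasCompactSupport (HasCompactSupport.intro hK h0)

lemma pder_ofReal_mul_inner {Ξr : Ed d → ℝ} {a b : Ed d → Vn n} {x : Ed d}
    (hΞ : DifferentiableAt ℝ Ξr x) (ha : DifferentiableAt ℝ a x)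
    (hb : DifferentiableAt ℝ b x) (j : Fin d) :
    pder j (fun y => (Ξr y : ℂ) * (inner ℂ (a y) (b y) : ℂ)) x
      = ((pder j Ξr x : ℝ) : ℂ) * (inner ℂ (a x) (b x) : ℂ)
        + (Ξr x : ℂ) * ((inner ℂ (pder j a x) (b x) : ℂ)
            + (inner ℂ (a x) (pder j b x) : ℂ)) := by
  have hc : DifferentiableAt ℝ (fun y => (Ξr y : ℂ)) x :=
    Complex.ofRealCLM.differentiableAt.comp x hΞ
  have hi : DifferentiableAt ℝ (fun y => (inner ℂ (a y) (b y) : ℂ)) x := ha.inner ℂ hb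
  have hfc : fderiv ℝ (fun y => (Ξr y : ℂ)) x (EuclideanSpace.single j 1)
      = ((pder j Ξr x : ℝ) : ℂ) := by
    rw [show (fun y => (Ξr y : ℂ)) = (⇑Complex.ofRealCLM ∘ Ξr) from rfl,
      fderiv_comp x Complex.ofRealCLM.differentiableAt hΞ, ContinuousLinearMap.fderiv]
    rfl
  show fderiv ℝ _ x _ = _
  rw [fderiv_fun_mul hc hi, ContinuousLinearMap.add_apply, ContinuousLinearMap.smul_apply,
    ContinuousLinearMap.smul_apply, hfc, fderiv_inner_apply ℂ ha hb]
  simp only [smul_eq_mul, pder]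
  ring

lemma pder_clm (B : Opn n) {c : Ed d → Vn n} {x : Ed d}
    (hc : DifferentiableAt ℝ c x) (j : Fin d) :
    pder j (fun y => B (c y)) x = B (pder j c x) := by
  show fderiv ℝ _ x _ = _
  rw [show (fun y => B (c y)) = (⇑(B.restrictScalars ℝ) ∘ c) from rfl,
    fderiv_comp x (B.restrictScalars ℝ).differentiableAt hc, ContinuousLinearMap.fderiv]
  rfl


lemma integral_add3 {f g h : Ed d → ℂ} (hf : Integrable f volume) (hg : Integrable g volume)
    (hh : Integrable h volume) :
    ∫ x, (f x + g x + h x) = (∫ x, f x) + (∫ x, g x) + ∫ x, h x := by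
  have e1 : ∫ x, (f x + g x) = (∫ x, f x) + ∫ x, g x := integral_add hf hg
  have e2 : ∫ x, (f x + g x + h x) = (∫ x, (f x + g x)) + ∫ x, h x :=
    integral_add (hf.add hg) hh
  rw [e2, e1]

end DLCaux

section DLCcore

variable (α : Fin d → Opn n) (Ξ : Ed d → ℝ) (u : Ed d → Vn n)

/-- `α_j p_j u`. -/
def DLCAu (x : Ed d) : Vn n := ∑ j, α j (pj j u x)

def gC (j k : Fin d) (x : Ed d) : ℂ :=
  (Ξ x : ℂ) * (inner ℂ (pder j u x) (α j (α k (pder k u x))) : ℂ)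
def gG (j k : Fin d) (x : Ed d) : ℂ :=
  ((pder j Ξ x : ℝ) : ℂ) * (inner ℂ (u x) (α j (α k (pder k u x))) : ℂ)
def gM2 (j k : Fin d) (x : Ed d) : ℂ :=
  (Ξ x : ℂ) * (inner ℂ (u x) (α j (α k (pder j (pder k u) x))) : ℂ)
def gP (j : Fin d) (x : Ed d) : ℂ :=
  (Ξ x : ℂ) * (inner ℂ (pder j u x) (pder j u x) : ℂ)
def gM (j : Fin d) (x : Ed d) : ℂ :=
  (Ξ x : ℂ) * (inner ℂ (u x) (pder j (pder j u) x) : ℂ)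
def gR (j : Fin d) (x : Ed d) : ℂ :=
  ((pder j Ξ x : ℝ) : ℂ) * (inner ℂ (u x) (pder j u x) : ℂ)
def gR' (j : Fin d) (x : Ed d) : ℂ :=
  ((pder j Ξ x : ℝ) : ℂ) * (inner ℂ (pder j u x) (u x) : ℂ)
def gS (j : Fin d) (x : Ed d) : ℂ :=
  ((pder j (pder j Ξ) x : ℝ) : ℂ) * (inner ℂ (u x) (u x) : ℂ)

end DLCcore

section DLCcoreProof

variable {α : Fin d → Opn n} {Ξ : Ed d → ℝ} {u : Ed d → Vn n}

theorem dlc_core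
    (halpha_sa : ∀ j, ∀ v w : Vn n, (inner ℂ (α j v) w : ℂ) = inner ℂ v (α j w))
    (hanti : ∀ j k, α j ∘L α k + α k ∘L α j = if j = k then (2 : ℂ) • (1 : Opn n) else 0)
    (hΞ : ContDiff ℝ 2 Ξ) (hu : ContDiff ℝ (⊤ : ℕ∞) u) (husupp : HasCompactSupport u) :
    ∑ j, (∫ x, (inner ℂ (pj j u x) (Ξ x • pj j u x) : ℂ)).re
      = (∫ x, (inner ℂ (DLCAu α u x) (Ξ x • DLCAu α u x) : ℂ)).re
      + (∫ x, (inner ℂ (u x)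
            (Complex.I • ((∑ j, pder j Ξ x • α j) (DLCAu α u x))) : ℂ)).re
      + (1/2) * (∫ x, (inner ℂ (u x) (lapl Ξ x • u x) : ℂ)).re := by
  classical
  -- smoothness infrastructure
  have hu2 : ContDiff ℝ 2 u := hu.of_le (WithTop.coe_le_coe.mpr le_top)
  have hud : Differentiable ℝ u := hu2.differentiable two_ne_zero
  have hucont : Continuous u := hud.continuous
  have hduC : ∀ j : Fin d, ContDiff ℝ 1 (pder j u) := fun j => pder_contDiff hu (WithTop.coe_le_coe.mpr le_top) j
  have hduD : ∀ j : Fin d, Differentiable ℝ (pder j u) := fun j => (hduC j).differentiable one_ne_zero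
  have hducont : ∀ j : Fin d, Continuous (pder j u) := fun j => (hduD j).continuous
  have hΞd : Differentiable ℝ Ξ := hΞ.differentiable two_ne_zero
  have hΞcont : Continuous Ξ := hΞd.continuous
  have hdΞC : ∀ j : Fin d, ContDiff ℝ 1 (pder j Ξ) := fun j => pder_contDiff hΞ (by norm_num) j
  have hdΞd : ∀ j : Fin d, Differentiable ℝ (pder j Ξ) := fun j => (hdΞC j).differentiable one_ne_zero
  have hdΞcont : ∀ j : Fin d, Continuous (pder j Ξ) := fun j => (hdΞd j).continuous
  have hd2Ξcont : ∀ j k : Fin d, Continuous (pder j (pder k Ξ)) := fun j k =>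
    (pder_contDiff (m := 0) (hdΞC k) (by norm_num) j).continuous
  have hd2cont : ∀ j k : Fin d, Continuous (pder j (pder k u)) := fun j k =>
    (pder_contDiff (m := 0) (hduC k) (by norm_num) j).continuous
  have hK : IsCompact (tsupport u) := husupp
  have hu0 : ∀ x, x ∉ tsupport u → u x = 0 := fun x hx => image_eq_zero_of_notMem_tsupport hx
  have hdu0 : ∀ (j : Fin d) x, x ∉ tsupport u → pder j u x = 0 :=
    fun j x hx => pder_zero_of_nmem hx j
  -- integrability of the basic integrands
  have integC : ∀ j k : Fin d, Integrable (gC α Ξ u j k) := fun j k =>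
    integ_cont_supp ((Complex.continuous_ofReal.comp hΞcont).mul
      ((hducont j).inner ((α j).continuous.comp ((α k).continuous.comp (hducont k)))))
      hK (fun x hx => by simp [gC, hdu0 j x hx])
  have integG : ∀ j k : Fin d, Integrable (gG α Ξ u j k) := fun j k =>
    integ_cont_supp ((Complex.continuous_ofReal.comp (hdΞcont j)).mul
      (hucont.inner ((α j).continuous.comp ((α k).continuous.comp (hducont k)))))
      hK (fun x hx => by simp [gG, hu0 x hx])
  have integM2 : ∀ j k : Fin d, Integrable (gM2 α Ξ u j k) := fun j k =>
    integ_cont_supp ((Complex.continuous_ofReal.comp hΞcont).mul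
      (hucont.inner ((α j).continuous.comp ((α k).continuous.comp (hd2cont j k)))))
      hK (fun x hx => by simp [gM2, hu0 x hx])
  have integP : ∀ j : Fin d, Integrable (gP Ξ u j) := fun j =>
    integ_cont_supp ((Complex.continuous_ofReal.comp hΞcont).mul
      ((hducont j).inner (hducont j))) hK (fun x hx => by simp [gP, hdu0 j x hx])
  have integM : ∀ j : Fin d, Integrable (gM Ξ u j) := fun j =>
    integ_cont_supp ((Complex.continuous_ofReal.comp hΞcont).mul
      (hucont.inner (hd2cont j j))) hK (fun x hx => by simp [gM, hu0 x hx])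
  have integR : ∀ j : Fin d, Integrable (gR Ξ u j) := fun j =>
    integ_cont_supp ((Complex.continuous_ofReal.comp (hdΞcont j)).mul
      (hucont.inner (hducont j))) hK (fun x hx => by simp [gR, hu0 x hx])
  have integR' : ∀ j : Fin d, Integrable (gR' Ξ u j) := fun j =>
    integ_cont_supp ((Complex.continuous_ofReal.comp (hdΞcont j)).mul
      ((hducont j).inner hucont)) hK (fun x hx => by simp [gR', hu0 x hx])
  have integS : ∀ j : Fin d, Integrable (gS Ξ u j) := fun j =>
    integ_cont_supp ((Complex.continuous_ofReal.comp (hd2Ξcont j j)).mul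
      (hucont.inner hucont)) hK (fun x hx => by simp [gS, hu0 x hx])
  -- integration by parts relations
  have I1 : ∀ j k : Fin d,
      (∫ x, gG α Ξ u j k x) + (∫ x, gC α Ξ u j k x) + (∫ x, gM2 α Ξ u j k x) = 0 := by
    intro j k
    have hbC : ContDiff ℝ 1 (fun y => ((α j).comp (α k)) (pder k u y)) := by
      have := (((α j).comp (α k)).restrictScalars ℝ).contDiff.comp (hduC k)
      simpa [Function.comp_def] using this
    have hbD : Differentiable ℝ (fun y => ((α j).comp (α k)) (pder k u y)) :=
      hbC.differentiable one_ne_zero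
    have hF : ContDiff ℝ 1
        (fun y => (Ξ y : ℂ) * (inner ℂ (u y) (((α j).comp (α k)) (pder k u y)) : ℂ)) :=
      ((Complex.ofRealCLM.contDiff).comp (hΞ.of_le one_le_two)).mul
        ((hu.of_le (WithTop.coe_le_coe.mpr le_top) : ContDiff ℝ 1 u).inner ℂ hbC)
    have hFs : HasCompactSupport
        (fun y => (Ξ y : ℂ) * (inner ℂ (u y) (((α j).comp (α k)) (pder k u y)) : ℂ)) :=
      HasCompactSupport.intro hK fun x hx => by simp [hu0 x hx]
    have h0 := integral_pder_eq_zero hF hFs j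
    have hpt : ∀ x, pder j
          (fun y => (Ξ y : ℂ) * (inner ℂ (u y) (((α j).comp (α k)) (pder k u y)) : ℂ)) x
        = gG α Ξ u j k x + gC α Ξ u j k x + gM2 α Ξ u j k x := by
      intro x
      rw [pder_ofReal_mul_inner (hΞd x) (hud x) (hbD x) j,
        pder_clm ((α j).comp (α k)) ((hduD k) x) j]
      simp only [gG, gC, gM2, ContinuousLinearMap.comp_apply]
      ring
    calc (∫ x, gG α Ξ u j k x) + (∫ x, gC α Ξ u j k x) + (∫ x, gM2 α Ξ u j k x)
        = ∫ x, (gG α Ξ u j k x + gC α Ξ u j k x + gM2 α Ξ u j k x) :=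
          (integral_add3 (integG j k) (integC j k) (integM2 j k)).symm
      _ = _ := integral_congr_ae (Filter.Eventually.of_forall fun x => (hpt x).symm)
      _ = 0 := h0
  have I2 : ∀ j : Fin d,
      (∫ x, gR Ξ u j x) + (∫ x, gP Ξ u j x) + (∫ x, gM Ξ u j x) = 0 := by
    intro j
    have hF : ContDiff ℝ 1 (fun y => (Ξ y : ℂ) * (inner ℂ (u y) (pder j u y) : ℂ)) :=
      ((Complex.ofRealCLM.contDiff).comp (hΞ.of_le one_le_two)).mul
        ((hu.of_le (WithTop.coe_le_coe.mpr le_top) : ContDiff ℝ 1 u).inner ℂ (hduC j))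
    have hFs : HasCompactSupport (fun y => (Ξ y : ℂ) * (inner ℂ (u y) (pder j u y) : ℂ)) :=
      HasCompactSupport.intro hK fun x hx => by simp [hu0 x hx]
    have h0 := integral_pder_eq_zero hF hFs j
    have hpt : ∀ x, pder j (fun y => (Ξ y : ℂ) * (inner ℂ (u y) (pder j u y) : ℂ)) x
        = gR Ξ u j x + gP Ξ u j x + gM Ξ u j x := by
      intro x
      rw [pder_ofReal_mul_inner (hΞd x) (hud x) ((hduD j) x) j]
      simp only [gR, gP, gM]
      ring
    calc (∫ x, gR Ξ u j x) + (∫ x, gP Ξ u j x) + (∫ x, gM Ξ u j x)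
        = ∫ x, (gR Ξ u j x + gP Ξ u j x + gM Ξ u j x) :=
          (integral_add3 (integR j) (integP j) (integM j)).symm
      _ = _ := integral_congr_ae (Filter.Eventually.of_forall fun x => (hpt x).symm)
      _ = 0 := h0
  have I3 : ∀ j : Fin d,
      (∫ x, gS Ξ u j x) + (∫ x, gR' Ξ u j x) + (∫ x, gR Ξ u j x) = 0 := by
    intro j
    have hF : ContDiff ℝ 1 (fun y => ((pder j Ξ y : ℝ) : ℂ) * (inner ℂ (u y) (u y) : ℂ)) :=
      ((Complex.ofRealCLM.contDiff).comp (hdΞC j)).mul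
        ((hu.of_le (WithTop.coe_le_coe.mpr le_top) : ContDiff ℝ 1 u).inner ℂ (hu.of_le (WithTop.coe_le_coe.mpr le_top)))
    have hFs : HasCompactSupport (fun y => ((pder j Ξ y : ℝ) : ℂ) * (inner ℂ (u y) (u y) : ℂ)) :=
      HasCompactSupport.intro hK fun x hx => by simp [hu0 x hx]
    have h0 := integral_pder_eq_zero hF hFs j
    have hpt : ∀ x, pder j (fun y => ((pder j Ξ y : ℝ) : ℂ) * (inner ℂ (u y) (u y) : ℂ)) x
        = gS Ξ u j x + gR' Ξ u j x + gR Ξ u j x := by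
      intro x
      rw [pder_ofReal_mul_inner ((hdΞd j) x) (hud x) (hud x) j]
      simp only [gS, gR', gR]
      ring
    calc (∫ x, gS Ξ u j x) + (∫ x, gR' Ξ u j x) + (∫ x, gR Ξ u j x)
        = ∫ x, (gS Ξ u j x + gR' Ξ u j x + gR Ξ u j x) :=
          (integral_add3 (integS j) (integR' j) (integR j)).symm
      _ = _ := integral_congr_ae (Filter.Eventually.of_forall fun x => (hpt x).symm)
      _ = 0 := h0
  -- symmetrization
  have hsym : ∀ x, (∑ j, ∑ k, gM2 α Ξ u j k x) = ∑ j, gM Ξ u j x := by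
    intro x
    simp only [gM2, gM, ← Finset.mul_sum]
    congr 1
    have key : (2:ℂ) * (∑ j, ∑ k, (inner ℂ (u x) (α j (α k (pder j (pder k u) x))) : ℂ))
        = (2:ℂ) * ∑ j : Fin d, (inner ℂ (u x) (pder j (pder j u) x) : ℂ) := by
      have hswap : (∑ j, ∑ k, (inner ℂ (u x) (α j (α k (pder j (pder k u) x))) : ℂ))
          = ∑ j, ∑ k, (inner ℂ (u x) (α k (α j (pder j (pder k u) x))) : ℂ) := by
        rw [Finset.sum_comm]
        refine Finset.sum_congr rfl fun j _ => Finset.sum_congr rfl fun k _ => ?_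
        rw [pder_comm hu2]
      calc (2:ℂ) * ∑ j, ∑ k, (inner ℂ (u x) (α j (α k (pder j (pder k u) x))) : ℂ)
          = (∑ j, ∑ k, (inner ℂ (u x) (α j (α k (pder j (pder k u) x))) : ℂ))
            + ∑ j, ∑ k, (inner ℂ (u x) (α k (α j (pder j (pder k u) x))) : ℂ) := by
            rw [← hswap]; ring
        _ = ∑ j, ∑ k, ((inner ℂ (u x) (α j (α k (pder j (pder k u) x))) : ℂ)
            + (inner ℂ (u x) (α k (α j (pder j (pder k u) x))) : ℂ)) := by
            rw [← Finset.sum_add_distrib]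
            exact Finset.sum_congr rfl fun j _ => (Finset.sum_add_distrib).symm
        _ = ∑ j, ∑ k, (inner ℂ (u x)
              ((α j ∘L α k + α k ∘L α j) (pder j (pder k u) x)) : ℂ) := by
            refine Finset.sum_congr rfl fun j _ => Finset.sum_congr rfl fun k _ => ?_
            rw [ContinuousLinearMap.add_apply, inner_add_right]
            rfl
        _ = ∑ j, ∑ k, (if j = k then (2:ℂ) * (inner ℂ (u x) (pder j (pder k u) x) : ℂ) else 0) := by
            refine Finset.sum_congr rfl fun j _ => Finset.sum_congr rfl fun k _ => ?_
            rw [hanti j k]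
            by_cases h : j = k
            · simp [h, two_smul, inner_add_right, two_mul]
            · simp [h]
        _ = (2:ℂ) * ∑ j : Fin d, (inner ℂ (u x) (pder j (pder j u) x) : ℂ) := by
            rw [Finset.mul_sum]
            exact Finset.sum_congr rfl fun j _ => by simp
    exact mul_left_cancel₀ two_ne_zero key
  have hM2sumInt : (∑ j, ∑ k, ∫ x, gM2 α Ξ u j k x) = ∑ j, ∫ x, gM Ξ u j x := by
    have h1 : (∑ j, ∑ k, ∫ x, gM2 α Ξ u j k x)
        = ∑ j : Fin d, ∫ x, ∑ k, gM2 α Ξ u j k x :=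
      Finset.sum_congr rfl fun j _ =>
        (integral_finset_sum _ fun k _ => integM2 j k).symm
    have h2 : (∑ j : Fin d, ∫ x, ∑ k, gM2 α Ξ u j k x)
        = ∫ x, ∑ j, ∑ k, gM2 α Ξ u j k x :=
      (integral_finset_sum _ fun j _ => integrable_finset_sum _ fun k _ => integM2 j k).symm
    rw [h1, h2, integral_congr_ae (Filter.Eventually.of_forall hsym),
      integral_finset_sum _ fun j _ => integM j]
  -- conjugation relation
  have hconj : ∀ j : Fin d, (∫ x, gR' Ξ u j x) = (starRingEnd ℂ) (∫ x, gR Ξ u j x) := by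
    intro j
    rw [← integral_conj]
    refine integral_congr_ae (Filter.Eventually.of_forall fun x => ?_)
    show gR' Ξ u j x = (starRingEnd ℂ) (gR Ξ u j x)
    simp only [gR, gR', map_mul, Complex.conj_ofReal, inner_conj_symm]
  -- reduction of the three target integrals
  have hPj : ∀ j : Fin d, (∫ x, (inner ℂ (pj j u x) (Ξ x • pj j u x) : ℂ)) = ∫ x, gP Ξ u j x := by
    intro j
    have hpt : ∀ x, (inner ℂ (pj j u x) (Ξ x • pj j u x) : ℂ) = gP Ξ u j x := by
      intro x
      rw [show Ξ x • pj j u x = ((Ξ x : ℝ) : ℂ) • pj j u x from (Complex.coe_smul _ _).symm]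
      simp only [pj, gP, inner_smul_left, inner_smul_right, smul_smul, map_neg, Complex.conj_I]
      ring_nf
      simp [Complex.I_sq]
    exact integral_congr_ae (Filter.Eventually.of_forall hpt)
  have hC : (∫ x, (inner ℂ (DLCAu α u x) (Ξ x • DLCAu α u x) : ℂ))
      = ∑ j, ∑ k, ∫ x, gC α Ξ u j k x := by
    have hpt : ∀ x, (inner ℂ (DLCAu α u x) (Ξ x • DLCAu α u x) : ℂ)
        = ∑ j, ∑ k, gC α Ξ u j k x := by
      intro x
      rw [show Ξ x • DLCAu α u x = ((Ξ x : ℝ) : ℂ) • DLCAu α u x from (Complex.coe_smul _ _).symm,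
        inner_smul_right]
      unfold DLCAu
      rw [sum_inner, Finset.mul_sum]
      refine Finset.sum_congr rfl fun j _ => ?_
      rw [inner_sum, Finset.mul_sum]
      refine Finset.sum_congr rfl fun k _ => ?_
      unfold pj
      rw [_root_.map_smul, _root_.map_smul, inner_smul_left, inner_smul_right, halpha_sa j]
      unfold gC
      simp only [map_neg, Complex.conj_I]
      ring_nf
      simp [Complex.I_sq]
    rw [integral_congr_ae (Filter.Eventually.of_forall hpt),
      integral_finset_sum _ fun j _ => integrable_finset_sum _ fun k _ => integC j k]
    exact Finset.sum_congr rfl fun j _ => integral_finset_sum _ fun k _ => integC j k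
  have hG : (∫ x, (inner ℂ (u x)
        (Complex.I • ((∑ j, pder j Ξ x • α j) (DLCAu α u x))) : ℂ))
      = ∑ j, ∑ k, ∫ x, gG α Ξ u j k x := by
    have hpt : ∀ x, (inner ℂ (u x)
          (Complex.I • ((∑ j, pder j Ξ x • α j) (DLCAu α u x))) : ℂ)
        = ∑ j, ∑ k, gG α Ξ u j k x := by
      intro x
      rw [inner_smul_right, ContinuousLinearMap.sum_apply, inner_sum, Finset.mul_sum]
      refine Finset.sum_congr rfl fun j _ => ?_
      rw [ContinuousLinearMap.smul_apply,
        show pder j Ξ x • (α j) (DLCAu α u x)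
          = ((pder j Ξ x : ℝ) : ℂ) • (α j) (DLCAu α u x) from (Complex.coe_smul _ _).symm,
        inner_smul_right]
      unfold DLCAu
      rw [_root_.map_sum, inner_sum, Finset.mul_sum, Finset.mul_sum]
      refine Finset.sum_congr rfl fun k _ => ?_
      unfold pj
      rw [_root_.map_smul, _root_.map_smul, inner_smul_right]
      unfold gG
      ring_nf
      simp [Complex.I_sq]
    rw [integral_congr_ae (Filter.Eventually.of_forall hpt),
      integral_finset_sum _ fun j _ => integrable_finset_sum _ fun k _ => integG j k]
    exact Finset.sum_congr rfl fun j _ => integral_finset_sum _ fun k _ => integG j k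
  have hL : (∫ x, (inner ℂ (u x) (lapl Ξ x • u x) : ℂ)) = ∑ j, ∫ x, gS Ξ u j x := by
    have hpt : ∀ x, (inner ℂ (u x) (lapl Ξ x • u x) : ℂ) = ∑ j, gS Ξ u j x := by
      intro x
      simp only [lapl, Finset.sum_smul, inner_sum]
      refine Finset.sum_congr rfl fun j _ => ?_
      rw [show (pder j (fun y => pder j Ξ y) x) • u x
          = ((pder j (pder j Ξ) x : ℝ) : ℂ) • u x from (Complex.coe_smul _ _).symm]
      rw [inner_smul_right]
      rfl
    rw [integral_congr_ae (Filter.Eventually.of_forall hpt),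
      integral_finset_sum _ fun j _ => integS j]
  -- final assembly
  have hPsum : (∑ j, (∫ x, (inner ℂ (pj j u x) (Ξ x • pj j u x) : ℂ)).re)
      = (∑ j, ∫ x, gP Ξ u j x).re := by
    rw [Complex.re_sum]
    exact Finset.sum_congr rfl fun j _ => by rw [hPj j]
  rw [hPsum, hC, hG, hL]
  set A := ∑ j, ∑ k, ∫ x, gC α Ξ u j k x with hA
  set B := ∑ j, ∑ k, ∫ x, gG α Ξ u j k x with hB
  set M := ∑ j, ∫ x, gM Ξ u j x with hM
  set P := ∑ j, ∫ x, gP Ξ u j x with hP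
  set R := ∑ j, ∫ x, gR Ξ u j x with hR
  set R' := ∑ j, ∫ x, gR' Ξ u j x with hR'
  set S := ∑ j, ∫ x, gS Ξ u j x with hS
  have f1 : B + A + M = 0 := by
    rw [hA, hB, ← hM2sumInt, ← Finset.sum_add_distrib, ← Finset.sum_add_distrib]
    refine Finset.sum_eq_zero fun j _ => ?_
    rw [← Finset.sum_add_distrib, ← Finset.sum_add_distrib]
    exact Finset.sum_eq_zero fun k _ => I1 j k
  have f2 : R + P + M = 0 := by
    rw [hR, hP, hM, ← Finset.sum_add_distrib, ← Finset.sum_add_distrib]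
    exact Finset.sum_eq_zero fun j _ => I2 j
  have f3 : S + R' + R = 0 := by
    rw [hS, hR', hR, ← Finset.sum_add_distrib, ← Finset.sum_add_distrib]
    exact Finset.sum_eq_zero fun j _ => I3 j
  have f4 : R' = (starRingEnd ℂ) R := by
    rw [hR', hR, map_sum]
    exact Finset.sum_congr rfl fun j _ => hconj j
  have hAB : A + B = R + P := by linear_combination f1 - f2
  have hSS : S = -(starRingEnd ℂ) R - R := by linear_combination f3 - f4
  have : A.re + B.re + (1/2 : ℝ) * S.re = P.re := by
    have h1 : A.re + B.re = R.re + P.re := by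
      have := congrArg Complex.re hAB
      simpa [Complex.add_re] using this
    have h2 : S.re = -(2 * R.re) := by
      rw [hSS]
      simp [Complex.sub_re, Complex.neg_re, Complex.conj_re]
      ring
    rw [h1, h2]
    ring
  linarith [this]


end DLCcoreProof

section DLCmain

variable {d n : ℕ}

lemma integral_add4 {f g h k : Ed d → ℂ} (hf : Integrable f volume) (hg : Integrable g volume)
    (hh : Integrable h volume) (hk : Integrable k volume) :
    ∫ x, (f x + g x + h x + k x) = (∫ x, f x) + (∫ x, g x) + (∫ x, h x) + ∫ x, k x := by
  have e1 : ∫ x, (f x + g x + h x) = (∫ x, f x) + (∫ x, g x) + ∫ x, h x :=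
    integral_add3 hf hg hh
  have e2 : ∫ x, (f x + g x + h x + k x) = (∫ x, (f x + g x + h x)) + ∫ x, k x :=
    integral_add ((hf.add hg).add hh) hk
  rw [e2, e1]

lemma integral_I_mul (f : Ed d → ℂ) : ∫ x, Complex.I * f x = Complex.I * ∫ x, f x := by
  simpa [smul_eq_mul] using integral_smul Complex.I f

lemma norm_inner_smul_le {a b : Vn n} {r : ℝ} {Ca Cr Cb : ℝ} (ha : ‖a‖ ≤ Ca)
    (hr : |r| ≤ Cr) (hb : ‖b‖ ≤ Cb) : ‖(inner ℂ a (r • b) : ℂ)‖ ≤ Ca * (Cr * Cb) := by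
  have h1 : ‖(inner ℂ a (r • b) : ℂ)‖ ≤ ‖a‖ * ‖r • b‖ := norm_inner_le_norm _ _
  have h2 : ‖r • b‖ = |r| * ‖b‖ := by rw [norm_smul, Real.norm_eq_abs]
  have h3 : ‖a‖ * ‖r • b‖ ≤ Ca * (Cr * Cb) := by
    rw [h2]
    exact mul_le_mul ha (mul_le_mul hr hb (norm_nonneg _) ((abs_nonneg r).trans hr))
      (by positivity) ((norm_nonneg a).trans ha)
  exact h1.trans h3

lemma norm_inner_apply_le {a b : Vn n} {T : Opn n} {Ca CT Cb : ℝ} (ha : ‖a‖ ≤ Ca)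
    (hT : ‖T‖ ≤ CT) (hb : ‖b‖ ≤ Cb) : ‖(inner ℂ a (T b) : ℂ)‖ ≤ Ca * (CT * Cb) := by
  have h1 : ‖(inner ℂ a (T b) : ℂ)‖ ≤ ‖a‖ * ‖T b‖ := norm_inner_le_norm _ _
  have h2 : ‖T b‖ ≤ CT * Cb :=
    (T.le_opNorm b).trans (mul_le_mul hT hb (norm_nonneg _) ((norm_nonneg T).trans hT))
  have h3 : ‖a‖ * ‖T b‖ ≤ Ca * (CT * Cb) :=
    mul_le_mul ha h2 (norm_nonneg _) ((norm_nonneg a).trans ha)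
  exact h1.trans h3

set_option maxHeartbeats 1000000 in
set_option synthInstance.maxHeartbeats 400000 in
theorem dirac_laplace_comparison'
    (α : Fin d → Opn n)
    (halpha_sa : ∀ j, ∀ v w : Vn n, (inner ℂ (α j v) w : ℂ) = inner ℂ v (α j w))
    (hanti : ∀ j k, α j ∘L α k + α k ∘L α j = if j = k then (2 : ℂ) • (1 : Opn n) else 0)
    (q : Ed d → Opn n) (hq_meas : AEStronglyMeasurable q volume)
    (hq_bdd : ∃ C, ∀ x, ‖q x‖ ≤ C)
    (hq_sa : ∀ x, ∀ v w : Vn n, (inner ℂ (q x v) w : ℂ) = inner ℂ v (q x w))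
    (z : ℂ) (Ξ : Ed d → ℝ) (hΞ : ContDiff ℝ 2 Ξ)
    (u : Ed d → Vn n) (hu : ContDiff ℝ (⊤ : ℕ∞) u) (husupp : HasCompactSupport u) :
    ∑ j, (∫ x, (inner ℂ (pj j u x) (Ξ x • pj j u x) : ℂ)).re
      = (∫ x, (inner ℂ (z • u x - q x (u x)) (Ξ x • (z • u x - q x (u x))) : ℂ)).re
      - (∫ x, (inner ℂ (u x)
            ((∑ j, pder j Ξ x • α j) (z • u x - q x (u x))) : ℂ)).im
      + (1/2) * (∫ x, (inner ℂ (u x) (lapl Ξ x • u x) : ℂ)).re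
      + 2 * (∫ x, (inner ℂ (z • u x - q x (u x)) (Ξ x • diracz α q z u x) : ℂ)).re
      + (∫ x, (inner ℂ (u x)
            (Complex.I • ((∑ j, pder j Ξ x • α j) (diracz α q z u x))) : ℂ)).re
      + (∫ x, (inner ℂ (diracz α q z u x) (Ξ x • diracz α q z u x) : ℂ)).re := by
  classical
  obtain ⟨Cq, hCq⟩ := hq_bdd
  -- infrastructure
  have hu2 : ContDiff ℝ 2 u := hu.of_le (WithTop.coe_le_coe.mpr le_top)
  have hud : Differentiable ℝ u := hu2.differentiable two_ne_zero
  have hucont : Continuous u := hud.continuous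
  have hduC : ∀ j : Fin d, ContDiff ℝ 1 (pder j u) := fun j => pder_contDiff hu (WithTop.coe_le_coe.mpr le_top) j
  have hducont : ∀ j : Fin d, Continuous (pder j u) := fun j =>
    ((hduC j).differentiable one_ne_zero).continuous
  have hΞcont : Continuous Ξ := (hΞ.differentiable two_ne_zero).continuous
  have hdΞcont : ∀ j : Fin d, Continuous (pder j Ξ) := fun j =>
    ((pder_contDiff hΞ (by norm_num) j).differentiable one_ne_zero).continuous
  have hK : IsCompact (tsupport u) := husupp
  have hu0 : ∀ x, x ∉ tsupport u → u x = 0 := fun x hx => image_eq_zero_of_notMem_tsupport hx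
  have hdu0 : ∀ (j : Fin d) x, x ∉ tsupport u → pder j u x = 0 :=
    fun j x hx => pder_zero_of_nmem hx j
  -- the three players
  have hAu_cont : Continuous (DLCAu α u) := by
    refine continuous_finset_sum _ fun j _ => (α j).continuous.comp ?_
    exact (continuous_const : Continuous fun _ : Ed d => -Complex.I).smul (hducont j)
  have hAu0 : ∀ x, x ∉ tsupport u → DLCAu α u x = 0 := fun x hx => by
    simp [DLCAu, pj, hdu0 _ x hx]
  have hAu_supp : HasCompactSupport (DLCAu α u) := HasCompactSupport.intro hK hAu0
  obtain ⟨CA, hCA⟩ := hAu_supp.exists_bound_of_continuous hAu_cont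
  obtain ⟨Cu, hCu⟩ := husupp.exists_bound_of_continuous hucont
  obtain ⟨CΞ, hCΞ⟩ := hK.exists_bound_of_continuousOn hΞcont.continuousOn
  have hXcont : Continuous (fun x => (∑ j, pder j Ξ x • α j : Opn n)) :=
    continuous_finset_sum _ fun j _ => (hdΞcont j).smul continuous_const
  obtain ⟨CX, hCX⟩ := hK.exists_bound_of_continuousOn hXcont.continuousOn
  have hqu_m : AEStronglyMeasurable (fun x => q x (u x)) volume :=
    isBoundedBilinearMap_apply.continuous.comp_aestronglyMeasurable
      (hq_meas.prodMk hucont.aestronglyMeasurable)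
  have hqu_b : ∀ x, ‖q x (u x)‖ ≤ Cq * Cu := fun x =>
    ((q x).le_opNorm (u x)).trans
      (mul_le_mul (hCq x) (hCu x) (norm_nonneg _) ((norm_nonneg _).trans (hCq x)))
  have hw_m : AEStronglyMeasurable (fun x => z • u x - q x (u x)) volume :=
    ((hucont.const_smul z).aestronglyMeasurable).sub hqu_m
  have hw_b : ∀ x, ‖z • u x - q x (u x)‖ ≤ ‖z‖ * Cu + Cq * Cu := fun x => by
    have h1 : ‖z • u x‖ ≤ ‖z‖ * Cu := by
      rw [norm_smul]
      exact mul_le_mul_of_nonneg_left (hCu x) (norm_nonneg z)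
    exact (norm_sub_le _ _).trans (add_le_add h1 (hqu_b x))
  have hw_0 : ∀ x, x ∉ tsupport u → z • u x - q x (u x) = 0 := fun x hx => by
    simp [hu0 x hx]
  have hDeq : ∀ x, diracz α q z u x = DLCAu α u x + (q x (u x) - z • u x) := fun x => by
    simp only [diracz, dirac, DLCAu]
    abel
  have hD_m : AEStronglyMeasurable (diracz α q z u) volume := by
    have : AEStronglyMeasurable (fun x => DLCAu α u x + (q x (u x) - z • u x)) volume :=
      hAu_cont.aestronglyMeasurable.add
        (hqu_m.sub (hucont.const_smul z).aestronglyMeasurable)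
    exact this.congr (Filter.Eventually.of_forall fun x => (hDeq x).symm)
  have hD_b : ∀ x, ‖diracz α q z u x‖ ≤ CA + (Cq * Cu + ‖z‖ * Cu) := fun x => by
    rw [hDeq x]
    refine (norm_add_le _ _).trans (add_le_add (hCA x) ?_)
    refine (norm_sub_le _ _).trans (add_le_add (hqu_b x) ?_)
    rw [norm_smul]
    exact mul_le_mul_of_nonneg_left (hCu x) (norm_nonneg z)
  have hD_0 : ∀ x, x ∉ tsupport u → diracz α q z u x = 0 := fun x hx => by
    rw [hDeq x]
    simp [hAu0 x hx, hu0 x hx]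
  set Cw := ‖z‖ * Cu + Cq * Cu with hCw
  set CD := CA + (Cq * Cu + ‖z‖ * Cu) with hCD
  -- integrability of the six q-integrands
  have hsmul_m : ∀ {v : Ed d → Vn n}, AEStronglyMeasurable v volume →
      AEStronglyMeasurable (fun x => Ξ x • v x) volume := fun hv =>
    hΞcont.aestronglyMeasurable.smul hv
  have hX_m : ∀ {v : Ed d → Vn n}, AEStronglyMeasurable v volume →
      AEStronglyMeasurable (fun x => (∑ j, pder j Ξ x • α j : Opn n) (v x)) volume := fun hv =>
    isBoundedBilinearMap_apply.continuous.comp_aestronglyMeasurable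
      (hXcont.aestronglyMeasurable.prodMk hv)
  have int1 : Integrable (fun x =>
      (inner ℂ (z • u x - q x (u x)) (Ξ x • (z • u x - q x (u x))) : ℂ)) volume := by
    refine integ_bdd_supp (hw_m.inner (hsmul_m hw_m)) hK (C := Cw * (CΞ * Cw))
      (fun x hx => norm_inner_smul_le (hw_b x) (by simpa using hCΞ x hx) (hw_b x))
      (fun x hx => by simp [hw_0 x hx])
  have int2 : Integrable (fun x =>
      (inner ℂ (z • u x - q x (u x)) (Ξ x • diracz α q z u x) : ℂ)) volume := by
    refine integ_bdd_supp (hw_m.inner (hsmul_m hD_m)) hK (C := Cw * (CΞ * CD))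
      (fun x hx => norm_inner_smul_le (hw_b x) (by simpa using hCΞ x hx) (hD_b x))
      (fun x hx => by simp [hw_0 x hx])
  have int3 : Integrable (fun x =>
      (inner ℂ (diracz α q z u x) (Ξ x • (z • u x - q x (u x))) : ℂ)) volume := by
    refine integ_bdd_supp (hD_m.inner (hsmul_m hw_m)) hK (C := CD * (CΞ * Cw))
      (fun x hx => norm_inner_smul_le (hD_b x) (by simpa using hCΞ x hx) (hw_b x))
      (fun x hx => by simp [hD_0 x hx])
  have int4 : Integrable (fun x =>
      (inner ℂ (diracz α q z u x) (Ξ x • diracz α q z u x) : ℂ)) volume := by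
    refine integ_bdd_supp (hD_m.inner (hsmul_m hD_m)) hK (C := CD * (CΞ * CD))
      (fun x hx => norm_inner_smul_le (hD_b x) (by simpa using hCΞ x hx) (hD_b x))
      (fun x hx => by simp [hD_0 x hx])
  have int5 : Integrable (fun x =>
      (inner ℂ (u x) ((∑ j, pder j Ξ x • α j : Opn n) (z • u x - q x (u x))) : ℂ)) volume := by
    refine integ_bdd_supp (hucont.aestronglyMeasurable.inner (hX_m hw_m)) hK
      (C := Cu * (CX * Cw))
      (fun x hx => norm_inner_apply_le (hCu x) (hCX x hx) (hw_b x))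
      (fun x hx => by simp [hu0 x hx])
  have int6 : Integrable (fun x =>
      (inner ℂ (u x) ((∑ j, pder j Ξ x • α j : Opn n) (diracz α q z u x)) : ℂ)) volume := by
    refine integ_bdd_supp (hucont.aestronglyMeasurable.inner (hX_m hD_m)) hK
      (C := Cu * (CX * CD))
      (fun x hx => norm_inner_apply_le (hCu x) (hCX x hx) (hD_b x))
      (fun x hx => by simp [hu0 x hx])
  -- splitting of Au
  have hAux : ∀ x, DLCAu α u x = (z • u x - q x (u x)) + diracz α q z u x := fun x => by
    rw [hDeq x]
    abel
  -- decomposition of the A1 integral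
  have hA1 : (∫ x, (inner ℂ (DLCAu α u x) (Ξ x • DLCAu α u x) : ℂ))
      = (∫ x, (inner ℂ (z • u x - q x (u x)) (Ξ x • (z • u x - q x (u x))) : ℂ))
        + (∫ x, (inner ℂ (z • u x - q x (u x)) (Ξ x • diracz α q z u x) : ℂ))
        + (∫ x, (inner ℂ (diracz α q z u x) (Ξ x • (z • u x - q x (u x))) : ℂ))
        + (∫ x, (inner ℂ (diracz α q z u x) (Ξ x • diracz α q z u x) : ℂ)) := by
    rw [← integral_add4 int1 int2 int3 int4]
    refine integral_congr_ae (Filter.Eventually.of_forall fun x => ?_)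
    beta_reduce
    rw [hAux x, smul_add, inner_add_left, inner_add_right, inner_add_right]
    ring
  have hT3' : (∫ x, (inner ℂ (diracz α q z u x) (Ξ x • (z • u x - q x (u x))) : ℂ))
      = (starRingEnd ℂ) (∫ x, (inner ℂ (z • u x - q x (u x)) (Ξ x • diracz α q z u x) : ℂ)) := by
    rw [← integral_conj]
    refine integral_congr_ae (Filter.Eventually.of_forall fun x => ?_)
    beta_reduce
    rw [show Ξ x • (z • u x - q x (u x)) = ((Ξ x : ℝ) : ℂ) • (z • u x - q x (u x))
        from (Complex.coe_smul _ _).symm,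
      show Ξ x • diracz α q z u x = ((Ξ x : ℝ) : ℂ) • diracz α q z u x
        from (Complex.coe_smul _ _).symm,
      inner_smul_right, inner_smul_right, map_mul, Complex.conj_ofReal, inner_conj_symm]
  -- decomposition of the A2 integral
  have hA2 : (∫ x, (inner ℂ (u x)
        (Complex.I • ((∑ j, pder j Ξ x • α j) (DLCAu α u x))) : ℂ))
      = Complex.I * (∫ x, (inner ℂ (u x)
          ((∑ j, pder j Ξ x • α j) (z • u x - q x (u x))) : ℂ))
        + (∫ x, (inner ℂ (u x)
            (Complex.I • ((∑ j, pder j Ξ x • α j) (diracz α q z u x))) : ℂ)) := by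
    have e1 : (∫ x, (inner ℂ (u x)
        (Complex.I • ((∑ j, pder j Ξ x • α j) (DLCAu α u x))) : ℂ))
        = ∫ x, (Complex.I * (inner ℂ (u x)
            ((∑ j, pder j Ξ x • α j) (z • u x - q x (u x))) : ℂ)
          + (inner ℂ (u x)
            (Complex.I • ((∑ j, pder j Ξ x • α j) (diracz α q z u x))) : ℂ)) := by
      refine integral_congr_ae (Filter.Eventually.of_forall fun x => ?_)
      beta_reduce
      rw [hAux x, map_add, smul_add, inner_add_right, inner_smul_right]
    rw [e1, integral_add (int5.const_mul Complex.I)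
      (by
        have : Integrable (fun x => Complex.I * (inner ℂ (u x)
            ((∑ j, pder j Ξ x • α j : Opn n) (diracz α q z u x)) : ℂ)) volume :=
          int6.const_mul Complex.I
        refine this.congr (Filter.Eventually.of_forall fun x => ?_)
        beta_reduce
        rw [inner_smul_right]),
      integral_I_mul]
  -- assemble
  have key := dlc_core halpha_sa hanti hΞ hu husupp
  rw [key, hA1, hA2, hT3']
  simp only [Complex.add_re, Complex.conj_re, Complex.mul_re, Complex.I_re, Complex.I_im]
  ring

end DLCmain

/-- **Comparison identity between the Dirac and Laplace quadratic forms** (Lemma 2.5):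
for Hermitian generators `α_j`, a bounded measurable Hermitian potential `q`, `z ∈ ℂ` and
`Ξ ∈ C²(ℝ^d; ℝ)`, the quadratic form `Σ_j ⟨p_j u, Ξ p_j u⟩` is given by the stated sum. -/
theorem dirac_laplace_comparison
    (d n : ℕ) (α : Fin d → Opn n)
    (halpha_sa : ∀ j, ∀ v w : Vn n, (inner ℂ (α j v) w : ℂ) = inner ℂ v (α j w))
    (hanti : ∀ j k, α j ∘L α k + α k ∘L α j = if j = k then (2 : ℂ) • (1 : Opn n) else 0)
    (q : Ed d → Opn n) (hq_meas : AEStronglyMeasurable q volume)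
    (hq_bdd : ∃ C, ∀ x, ‖q x‖ ≤ C)
    (hq_sa : ∀ x, ∀ v w : Vn n, (inner ℂ (q x v) w : ℂ) = inner ℂ v (q x w))
    (z : ℂ) (Ξ : Ed d → ℝ) (hΞ : ContDiff ℝ 2 Ξ)
    (u : Ed d → Vn n) (hu : ContDiff ℝ (⊤ : ℕ∞) u) (husupp : HasCompactSupport u) :
    ∑ j, (∫ x, (inner ℂ (pj j u x) (Ξ x • pj j u x) : ℂ)).re
      = (∫ x, (inner ℂ (z • u x - q x (u x)) (Ξ x • (z • u x - q x (u x))) : ℂ)).re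
      - (∫ x, (inner ℂ (u x)
            ((∑ j, pder j Ξ x • α j) (z • u x - q x (u x))) : ℂ)).im
      + (1/2) * (∫ x, (inner ℂ (u x) (lapl Ξ x • u x) : ℂ)).re
      + 2 * (∫ x, (inner ℂ (z • u x - q x (u x)) (Ξ x • diracz α q z u x) : ℂ)).re
      + (∫ x, (inner ℂ (u x)
            (Complex.I • ((∑ j, pder j Ξ x • α j) (diracz α q z u x))) : ℂ)).re
      + (∫ x, (inner ℂ (diracz α q z u x) (Ξ x • diracz α q z u x) : ℂ)).re :=
  dirac_laplace_comparison' α halpha_sa hanti q hq_meas hq_bdd hq_sa z Ξ hΞ u hu husupp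

end
end

section
/- Properties of the regularized weight: Fix δ ∈ (0, 1). For ν ∈ ℕ_0 define θ_ν : [1, ∞) → ℝ by θ_ν(t) = δ^{−1}(1 − (1 + t/2^ν)^{−δ}). Then: (i) there exist c, C > 0 such that for all ν ∈ ℕ_0 and all t ≥ 1: c·2^{−ν} ≤ θ_ν(t) ≤ min{C, t·2^{−ν}} and c·(min{2^ν, t})^δ · t^{−1−δ} · θ_ν(t) ≤ θ_ν′(t) ≤ t^{−1}θ_ν(t); (ii) for every integer k ≥ 2 there exists C_k > 0 such that for all ν ∈ ℕ_0 and all t ≥ 1: 0 ≤ (−1)^{k−1}θ_ν^{(k)}(t) ≤ C_k t^{−k} θ_ν(t), where θ_ν^{(k)} denotes the k-th derivative of θ_ν. -/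
open MeasureTheory Filter Topology Complex
open scoped ENNReal

noncomputable section

variable {d n : ℕ}

private lemma hasDerivAt_base (ν : ℕ) (p t : ℝ) (h : 0 < 1 + t / 2 ^ ν) :
    HasDerivAt (fun s : ℝ => (1 + s / 2 ^ ν) ^ p)
      (p * (1 + t / 2 ^ ν) ^ (p - 1) * ((2:ℝ) ^ ν)⁻¹) t := by
  have h1 : HasDerivAt (fun s : ℝ => 1 + s / 2 ^ ν) (((2:ℝ) ^ ν)⁻¹) t := by
    simpa [div_eq_mul_inv] using ((hasDerivAt_id t).div_const ((2:ℝ) ^ ν)).const_add 1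
  have h2 := (Real.hasDerivAt_rpow_const (x := 1 + t / 2 ^ ν) (p := p) (Or.inl h.ne')).comp t h1
  exact h2.congr_deriv (by ring)

private lemma hasDerivAt_thetaNu (δ : ℝ) (ν : ℕ) (t : ℝ) (h : 0 < 1 + t / 2 ^ ν) :
    HasDerivAt (thetaNu δ ν)
      (δ⁻¹ * δ * ((1 + t / 2 ^ ν) ^ (-δ - 1) * ((2:ℝ) ^ ν)⁻¹)) t := by
  have h2 := ((hasDerivAt_base ν (-δ) t h).const_sub 1).const_mul δ⁻¹
  have : thetaNu δ ν = fun s => δ⁻¹ * (1 - (1 + s / 2 ^ ν) ^ (-δ)) := rfl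
  rw [this]
  exact h2.congr_deriv (by ring)

private lemma iteratedDeriv_thetaNu (δ : ℝ) (ν : ℕ) :
    ∀ k : ℕ, ∀ t : ℝ, 0 < 1 + t / 2 ^ ν →
      iteratedDeriv (k + 1) (thetaNu δ ν) t
        = (-1:ℝ) ^ k * δ⁻¹ * (∏ i ∈ Finset.range (k + 1), (δ + i)) * (((2:ℝ) ^ ν)⁻¹) ^ (k + 1)
            * (1 + t / 2 ^ ν) ^ (-δ - ((k : ℝ) + 1)) := by
  intro k
  induction k with
  | zero =>
    intro t h
    rw [iteratedDeriv_one, (hasDerivAt_thetaNu δ ν t h).deriv]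
    norm_num
    ring
  | succ k ih =>
    intro t h
    have hopen : IsOpen {s : ℝ | 0 < 1 + s / 2 ^ ν} :=
      isOpen_lt continuous_const (by continuity)
    have hev : iteratedDeriv (k + 1) (thetaNu δ ν) =ᶠ[nhds t]
        fun s => ((-1:ℝ) ^ k * δ⁻¹ * (∏ i ∈ Finset.range (k + 1), (δ + i))
          * (((2:ℝ) ^ ν)⁻¹) ^ (k + 1)) * (1 + s / 2 ^ ν) ^ (-δ - ((k : ℝ) + 1)) := by
      filter_upwards [hopen.mem_nhds h] with s hs
      rw [ih s hs]
    rw [iteratedDeriv_succ, hev.deriv_eq]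
    have hd := (hasDerivAt_base ν (-δ - ((k : ℝ) + 1)) t h).const_mul
      ((-1:ℝ) ^ k * δ⁻¹ * (∏ i ∈ Finset.range (k + 1), (δ + i)) * (((2:ℝ) ^ ν)⁻¹) ^ (k + 1))
    rw [hd.deriv]
    have he : (-δ - ((k : ℝ) + 1)) - 1 = -δ - (((k:ℕ) + 1 : ℕ) + 1 : ℝ) := by push_cast; ring
    rw [he, show (∏ i ∈ Finset.range (k + 1 + 1), (δ + (i:ℝ)))
      = (∏ i ∈ Finset.range (k + 1), (δ + (i:ℝ))) * (δ + ((k:ℝ) + 1)) by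
        rw [Finset.prod_range_succ]; push_cast; ring]
    push_cast
    ring

/-- **Properties of the regularized weight** (Lemma 3.1): for `δ ∈ (0,1)` the functions
`θ_ν(t) = δ⁻¹(1 − (1 + t/2^ν)^{−δ})` satisfy the stated two-sided bounds, uniformly in
`ν ∈ ℕ₀`, together with the sign and size properties of all higher derivatives. -/
theorem regularized_weight_properties (δ : ℝ) (hδ0 : 0 < δ) (hδ1 : δ < 1) :
    (∃ c > 0, ∃ C > 0, ∀ ν : ℕ, ∀ t : ℝ, 1 ≤ t →
      c / 2 ^ ν ≤ thetaNu δ ν t ∧ thetaNu δ ν t ≤ min C (t / 2 ^ ν) ∧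
      c * (min ((2 : ℝ) ^ ν) t) ^ δ * t ^ (-1 - δ) * thetaNu δ ν t ≤ deriv (thetaNu δ ν) t ∧
      deriv (thetaNu δ ν) t ≤ t⁻¹ * thetaNu δ ν t)
    ∧ ∀ k : ℕ, 2 ≤ k → ∃ Ck > 0, ∀ ν : ℕ, ∀ t : ℝ, 1 ≤ t →
      0 ≤ (-1 : ℝ) ^ (k - 1) * iteratedDeriv k (thetaNu δ ν) t ∧
      (-1 : ℝ) ^ (k - 1) * iteratedDeriv k (thetaNu δ ν) t
        ≤ Ck / t ^ k * thetaNu δ ν t := by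
  have hδ0' := hδ0.ne'
  -- generic facts
  have hB : ∀ ν : ℕ, (0:ℝ) < 2 ^ ν := fun ν => pow_pos two_pos ν
  have hB1 : ∀ ν : ℕ, (1:ℝ) ≤ 2 ^ ν := fun ν => one_le_pow₀ one_le_two
  have hu0 : ∀ ν : ℕ, ∀ t : ℝ, 1 ≤ t → (0:ℝ) < 1 + t / 2 ^ ν := by
    intro ν t ht
    have := div_pos (lt_of_lt_of_le one_pos ht) (hB ν); linarith
  have hu1 : ∀ ν : ℕ, ∀ t : ℝ, 1 ≤ t → (1:ℝ) ≤ 1 + t / 2 ^ ν := by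
    intro ν t ht
    have := (div_pos (lt_of_lt_of_le one_pos ht) (hB ν)).le; linarith
  -- θ ≥ (t/2^ν)/u
  have hlow : ∀ ν : ℕ, ∀ t : ℝ, 1 ≤ t →
      t / 2 ^ ν / (1 + t / 2 ^ ν) ≤ thetaNu δ ν t := by
    intro ν t ht
    set u := 1 + t / 2 ^ ν with hu
    have hu0' : 0 < u := hu0 ν t ht
    have hgm := Real.geom_mean_le_arith_mean2_weighted hδ0.le (by linarith : (0:ℝ) ≤ 1 - δ)
      (inv_pos.mpr hu0').le zero_le_one (by ring)
    have heq : u ^ (-δ) = (u⁻¹) ^ δ := by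
      rw [Real.inv_rpow hu0'.le, ← Real.rpow_neg hu0'.le]
    have h1 : u ^ (-δ) ≤ δ * u⁻¹ + (1 - δ) := by
      rw [heq]
      calc (u⁻¹) ^ δ = (u⁻¹) ^ δ * 1 ^ (1 - δ) := by rw [Real.one_rpow]; ring
        _ ≤ δ * u⁻¹ + (1 - δ) * 1 := hgm
        _ = δ * u⁻¹ + (1 - δ) := by ring
    have h2 : δ * (1 - u⁻¹) ≤ 1 - u ^ (-δ) := by linarith
    have h3 : 1 - u⁻¹ = t / 2 ^ ν / u := by
      field_simp [hu]
      rw [hu, add_sub_cancel_left, div_mul_cancel₀ _ (hB ν).ne']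
    calc t / 2 ^ ν / u = δ⁻¹ * (δ * (1 - u⁻¹)) := by
          rw [h3]; field_simp
      _ ≤ δ⁻¹ * (1 - u ^ (-δ)) :=
          mul_le_mul_of_nonneg_left h2 (inv_pos.mpr hδ0).le
      _ = thetaNu δ ν t := rfl
  -- θ ≤ δ⁻¹
  have hleC : ∀ ν : ℕ, ∀ t : ℝ, 1 ≤ t → thetaNu δ ν t ≤ δ⁻¹ := by
    intro ν t ht
    have h1 : (0:ℝ) ≤ (1 + t / 2 ^ ν) ^ (-δ) := Real.rpow_nonneg (hu0 ν t ht).le _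
    have : 1 - (1 + t / 2 ^ ν) ^ (-δ) ≤ 1 := by linarith
    calc thetaNu δ ν t = δ⁻¹ * (1 - (1 + t / 2 ^ ν) ^ (-δ)) := rfl
      _ ≤ δ⁻¹ * 1 := mul_le_mul_of_nonneg_left this (inv_pos.mpr hδ0).le
      _ = δ⁻¹ := mul_one _
  -- θ ≤ t/2^ν
  have hlelin : ∀ ν : ℕ, ∀ t : ℝ, 1 ≤ t → thetaNu δ ν t ≤ t / 2 ^ ν := by
    intro ν t ht
    set u := 1 + t / 2 ^ ν with hu
    have hu0' : 0 < u := hu0 ν t ht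
    have hp : 0 < u ^ (-δ) := Real.rpow_pos_of_pos hu0' _
    have h1 : Real.log (u ^ (-δ)) ≤ u ^ (-δ) - 1 := Real.log_le_sub_one_of_pos hp
    have h2 : Real.log (u ^ (-δ)) = -δ * Real.log u := Real.log_rpow hu0' _
    have h3 : Real.log u ≤ u - 1 := Real.log_le_sub_one_of_pos hu0'
    have h4 : 1 - u ^ (-δ) ≤ δ * Real.log u := by rw [h2] at h1; linarith
    have h5 : u - 1 = t / 2 ^ ν := by rw [hu]; ring
    calc thetaNu δ ν t = δ⁻¹ * (1 - u ^ (-δ)) := rfl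
      _ ≤ δ⁻¹ * (δ * Real.log u) := mul_le_mul_of_nonneg_left h4 (inv_pos.mpr hδ0).le
      _ = Real.log u := by field_simp
      _ ≤ u - 1 := h3
      _ = t / 2 ^ ν := h5
  -- deriv value
  have hderiv : ∀ ν : ℕ, ∀ t : ℝ, 1 ≤ t →
      deriv (thetaNu δ ν) t = (1 + t / 2 ^ ν) ^ (-δ - 1) * ((2:ℝ) ^ ν)⁻¹ := by
    intro ν t ht
    rw [(hasDerivAt_thetaNu δ ν t (hu0 ν t ht)).deriv, inv_mul_cancel₀ hδ0', one_mul]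
  constructor
  · refine ⟨δ / 4, by linarith, δ⁻¹, inv_pos.mpr hδ0, ?_⟩
    intro ν t ht
    set u := 1 + t / 2 ^ ν with hudef
    have hu0' : 0 < u := hu0 ν t ht
    have hu1' : 1 ≤ u := hu1 ν t ht
    have ht0 : (0:ℝ) < t := lt_of_lt_of_le one_pos ht
    have hBν := hB ν
    have hB1ν := hB1 ν
    refine ⟨?_, le_min (hleC ν t ht) (hlelin ν t ht), ?_, ?_⟩
    · -- δ/4 / 2^ν ≤ θ
      have hs : ((2:ℝ) ^ ν)⁻¹ ≤ t / 2 ^ ν := by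
        rw [div_eq_mul_inv]
        nlinarith [inv_pos.mpr hBν]
      have hb1 : ((2:ℝ) ^ ν)⁻¹ ≤ 1 := inv_le_one_of_one_le₀ hB1ν
      have hstep : δ / 4 / 2 ^ ν ≤ t / 2 ^ ν / u := by
        rw [div_le_div_iff₀ (by positivity) hu0']
        have hi : (0:ℝ) < ((2:ℝ) ^ ν)⁻¹ := inv_pos.mpr hBν
        have hui : u = 1 + t / 2 ^ ν := hudef
        have h2 : t / 2 ^ ν * (2:ℝ) ^ ν = t := by field_simp
        nlinarith [hs, hb1, div_pos ht0 hBν]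
      exact hstep.trans (hlow ν t ht)
    · -- lower derivative bound
      rw [hderiv ν t ht]
      rcases le_total t ((2:ℝ) ^ ν) with hc | hc
      · -- min = t
        rw [min_eq_right hc]
        have h1 : t ^ δ * t ^ (-1 - δ) = t⁻¹ := by
          rw [← Real.rpow_add ht0, ← Real.rpow_neg_one t]
          norm_num
        have hθ := hlelin ν t ht
        have hθ0 : 0 ≤ thetaNu δ ν t := by
          have := hlow ν t ht
          have : 0 ≤ t / 2 ^ ν / u := by positivity
          linarith [hlow ν t ht]
        have hul2 : u ≤ 2 := by
          have : t / 2 ^ ν ≤ 1 := (div_le_one hBν).mpr hc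
          rw [hudef]; linarith
        have hu4 : (1:ℝ)/4 ≤ u ^ (-δ - 1) := by
          have e1 : u ^ (-δ - 1) = (u ^ (δ + 1))⁻¹ := by
            rw [← Real.rpow_neg hu0'.le]; ring_nf
          rw [e1]
          have e2 : u ^ (δ + 1) ≤ 2 ^ (δ + 1) := Real.rpow_le_rpow hu0'.le hul2 (by linarith)
          have e3 : (2:ℝ) ^ (δ + 1) ≤ 2 ^ (2:ℝ) :=
            Real.rpow_le_rpow_of_exponent_le one_le_two (by linarith)
          have e4 : (2:ℝ) ^ (2:ℝ) = 4 := by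
            rw [show (2:ℝ) = ((2:ℕ):ℝ) by norm_num, Real.rpow_natCast]; norm_num
          have : u ^ (δ + 1) ≤ 4 := by rw [← e4]; exact e2.trans e3
          calc (1:ℝ)/4 = 4⁻¹ := by norm_num
            _ ≤ (u ^ (δ + 1))⁻¹ := inv_anti₀ (by positivity) this
        calc δ / 4 * t ^ δ * t ^ (-1 - δ) * thetaNu δ ν t
            = δ / 4 * (t ^ δ * t ^ (-1 - δ)) * thetaNu δ ν t := by ring
          _ = δ / 4 * t⁻¹ * thetaNu δ ν t := by rw [h1]
          _ ≤ δ / 4 * t⁻¹ * (t / 2 ^ ν) := by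
              apply mul_le_mul_of_nonneg_left hθ (by positivity)
          _ = δ / 4 * ((2:ℝ) ^ ν)⁻¹ := by field_simp
          _ ≤ 1 / 4 * ((2:ℝ) ^ ν)⁻¹ := by
              apply mul_le_mul_of_nonneg_right _ (by positivity)
              linarith
          _ ≤ u ^ (-δ - 1) * ((2:ℝ) ^ ν)⁻¹ := by
              apply mul_le_mul_of_nonneg_right _ (by positivity)
              linarith [hu4]
      · -- min = 2^ν
        rw [min_eq_left hc]
        have hθ := hleC ν t ht
        have hθ0 : 0 ≤ thetaNu δ ν t := by
          have h0 : 0 ≤ t / 2 ^ ν / u := by positivity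
          linarith [hlow ν t ht]
        have hrw : δ / 4 * ((2:ℝ) ^ ν) ^ δ * t ^ (-1 - δ) * thetaNu δ ν t
            ≤ 1 / 4 * ((2:ℝ) ^ ν) ^ δ * t ^ (-1 - δ) := by
          have := mul_le_mul_of_nonneg_left hθ
            (show (0:ℝ) ≤ δ / 4 * ((2:ℝ) ^ ν) ^ δ * t ^ (-1 - δ) by positivity)
          calc δ / 4 * ((2:ℝ) ^ ν) ^ δ * t ^ (-1 - δ) * thetaNu δ ν t
              ≤ δ / 4 * ((2:ℝ) ^ ν) ^ δ * t ^ (-1 - δ) * δ⁻¹ := this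
            _ = 1 / 4 * ((2:ℝ) ^ ν) ^ δ * t ^ (-1 - δ) := by field_simp
        refine hrw.trans ?_
        -- show 1/4 B^δ t^{-1-δ} ≤ u^{-δ-1} B⁻¹
        have hBu : u ≤ 2 * t / 2 ^ ν := by
          have h1 : (1:ℝ) ≤ t / 2 ^ ν := (one_le_div hBν).mpr hc
          rw [hudef]
          have : 2 * t / 2 ^ ν = t / 2 ^ ν + t / 2 ^ ν := by ring
          linarith
        have hkey : (1:ℝ)/4 * ((2:ℝ) ^ ν / t) ^ (1 + δ) ≤ u ^ (-δ - 1) := by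
          have e1 : u ^ (1 + δ) ≤ (2 * t / 2 ^ ν) ^ (1 + δ) :=
            Real.rpow_le_rpow hu0'.le hBu (by linarith)
          have e2 : (2 * t / 2 ^ ν) ^ (1 + δ) = 2 ^ (1+δ) * (t / 2 ^ ν) ^ (1+δ) := by
            rw [← Real.mul_rpow (by norm_num) (by positivity)]
            ring_nf
          have e3 : (2:ℝ) ^ (1+δ) ≤ 4 := by
            have := Real.rpow_le_rpow_of_exponent_le (one_le_two) (show 1+δ ≤ (2:ℝ) by linarith)
            have e4 : (2:ℝ) ^ (2:ℝ) = 4 := by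
              rw [show (2:ℝ) = ((2:ℕ):ℝ) by norm_num, Real.rpow_natCast]; norm_num
            linarith [e4 ▸ this]
          have e5 : u ^ (1 + δ) ≤ 4 * (t / 2 ^ ν) ^ (1+δ) := by
            have h6 : (0:ℝ) ≤ (t / 2 ^ ν) ^ (1+δ) := by positivity
            nlinarith [e1, e2, e3, h6]
          have e6 : u ^ (-δ - 1) = (u ^ (1 + δ))⁻¹ := by
            rw [← Real.rpow_neg hu0'.le]; ring_nf
          have e7 : ((2:ℝ) ^ ν / t) ^ (1 + δ) = ((t / 2 ^ ν) ^ (1 + δ))⁻¹ := by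
            rw [← Real.inv_rpow (by positivity)]
            congr 1
            rw [inv_div]
          rw [e6, e7]
          have h44 : u ^ (1 + δ) ≤ (t / 2 ^ ν) ^ (1 + δ) * 4 := by linarith [e5]
          calc (1:ℝ)/4 * ((t / 2 ^ ν) ^ (1 + δ))⁻¹ = ((t / 2 ^ ν) ^ (1 + δ) * 4)⁻¹ := by
                rw [mul_inv]; ring
            _ ≤ (u ^ (1 + δ))⁻¹ := inv_anti₀ (by positivity) h44
        have e8 : ((2:ℝ) ^ ν / t) ^ (1 + δ) = (2:ℝ) ^ ν * ((2:ℝ)^ν) ^ δ * t ^ (-1-δ) := by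
          rw [Real.div_rpow (by positivity) ht0.le, Real.rpow_add hBν, Real.rpow_one]
          rw [show (-1 - δ) = -(1+δ) by ring, Real.rpow_neg ht0.le]
          ring
        calc 1 / 4 * ((2:ℝ) ^ ν) ^ δ * t ^ (-1 - δ)
            = (1/4 * ((2:ℝ) ^ ν / t) ^ (1 + δ)) * ((2:ℝ)^ν)⁻¹ := by
              rw [e8]; field_simp
          _ ≤ u ^ (-δ - 1) * ((2:ℝ)^ν)⁻¹ :=
              mul_le_mul_of_nonneg_right hkey (by positivity)
    · -- upper derivative bound
      rw [hderiv ν t ht]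
      have h1 : u ^ (-δ - 1) ≤ u⁻¹ := by
        rw [← Real.rpow_neg_one u]
        exact Real.rpow_le_rpow_of_exponent_le hu1' (by linarith)
      have h2 : t⁻¹ * (t / 2 ^ ν / u) = ((2:ℝ)^ν)⁻¹ * u⁻¹ := by
        field_simp
      calc u ^ (-δ - 1) * ((2:ℝ)^ν)⁻¹ ≤ u⁻¹ * ((2:ℝ)^ν)⁻¹ :=
            mul_le_mul_of_nonneg_right h1 (by positivity)
        _ = t⁻¹ * (t / 2 ^ ν / u) := by rw [h2]; ring
        _ ≤ t⁻¹ * thetaNu δ ν t :=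
            mul_le_mul_of_nonneg_left (hlow ν t ht) (by positivity)
  · intro k hk
    obtain ⟨m, rfl⟩ : ∃ m, k = m + 1 := ⟨k - 1, (Nat.succ_pred_eq_of_pos (by omega)).symm⟩
    have hprod : (0:ℝ) < ∏ i ∈ Finset.range (m + 1), (δ + i) := by
      apply Finset.prod_pos
      intro i _
      positivity
    refine ⟨δ⁻¹ * ∏ i ∈ Finset.range (m + 1), (δ + i), by positivity, ?_⟩
    intro ν t ht
    set u := 1 + t / 2 ^ ν with hudef
    have hu0' : 0 < u := hu0 ν t ht
    have hu1' : 1 ≤ u := hu1 ν t ht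
    have ht0 : (0:ℝ) < t := lt_of_lt_of_le one_pos ht
    have hBν := hB ν
    have hform := iteratedDeriv_thetaNu δ ν m t hu0'
    have hsign : ((-1:ℝ) ^ (m + 1 - 1)) * iteratedDeriv (m+1) (thetaNu δ ν) t
        = δ⁻¹ * (∏ i ∈ Finset.range (m + 1), (δ + i)) * (((2:ℝ) ^ ν)⁻¹) ^ (m + 1)
            * u ^ (-δ - ((m : ℝ) + 1)) := by
      rw [Nat.add_sub_cancel, hform]
      have : (-1:ℝ) ^ m * (-1:ℝ) ^ m = 1 := by
        rw [← mul_pow]; norm_num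
      calc (-1:ℝ) ^ m * ((-1:ℝ) ^ m * δ⁻¹ * (∏ i ∈ Finset.range (m + 1), (δ + i))
            * (((2:ℝ) ^ ν)⁻¹) ^ (m + 1) * u ^ (-δ - ((m : ℝ) + 1)))
          = ((-1:ℝ) ^ m * (-1:ℝ) ^ m) * (δ⁻¹ * (∏ i ∈ Finset.range (m + 1), (δ + i))
            * (((2:ℝ) ^ ν)⁻¹) ^ (m + 1) * u ^ (-δ - ((m : ℝ) + 1))) := by ring
        _ = _ := by rw [this, one_mul]
    rw [hsign]
    constructor
    · positivity
    · -- upper bound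
      have hθ := hlow ν t ht
      have hsplit : u ^ (-δ - ((m:ℝ) + 1)) = u ^ (-δ) * (u ^ (m+1 : ℕ))⁻¹ := by
        rw [← Real.rpow_natCast u (m+1), ← Real.rpow_neg hu0'.le,
          ← Real.rpow_add hu0']
        congr 1
        push_cast
        ring
      have huδ : u ^ (-δ) ≤ 1 :=
        Real.rpow_le_one_of_one_le_of_nonpos hu1' (by linarith)
      have htBu : t ≤ 2 ^ ν * u := by
        have : (2:ℝ) ^ ν * u = 2 ^ ν + t := by
          rw [hudef]; field_simp
        rw [this]; linarith
      have hkey : (((2:ℝ) ^ ν)⁻¹) ^ (m + 1) * (u ^ (m+1:ℕ))⁻¹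
          ≤ t / 2 ^ ν / u / t ^ (m+1) := by
        have hL : (((2:ℝ) ^ ν)⁻¹) ^ (m + 1) * (u ^ (m+1:ℕ))⁻¹
            = (((2:ℝ) ^ ν * u) ^ (m + 1))⁻¹ := by
          rw [inv_pow, ← mul_inv, ← mul_pow]
        rw [hL, div_div, div_div, inv_eq_one_div,
          div_le_div_iff₀ (by positivity) (by positivity)]
        have h1 : t ^ m ≤ ((2:ℝ) ^ ν * u) ^ m := pow_le_pow_left₀ ht0.le htBu m
        calc 1 * (2 ^ ν * (u * t ^ (m + 1))) = ((2:ℝ) ^ ν * u * t) * t ^ m := by ring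
          _ ≤ ((2:ℝ) ^ ν * u * t) * ((2:ℝ) ^ ν * u) ^ m :=
              mul_le_mul_of_nonneg_left h1 (by positivity)
          _ = t * ((2:ℝ) ^ ν * u) ^ (m + 1) := by ring
      calc δ⁻¹ * (∏ i ∈ Finset.range (m + 1), (δ + i)) * (((2:ℝ) ^ ν)⁻¹) ^ (m + 1)
            * u ^ (-δ - ((m : ℝ) + 1))
          = (δ⁻¹ * ∏ i ∈ Finset.range (m + 1), (δ + i))
            * (u ^ (-δ) * ((((2:ℝ) ^ ν)⁻¹) ^ (m + 1) * (u ^ (m+1:ℕ))⁻¹)) := by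
            rw [hsplit]; ring
        _ ≤ (δ⁻¹ * ∏ i ∈ Finset.range (m + 1), (δ + i))
            * (1 * (t / 2 ^ ν / u / t ^ (m+1))) := by
            apply mul_le_mul_of_nonneg_left _ (by positivity)
            apply mul_le_mul huδ hkey (by positivity) zero_le_one
        _ = (δ⁻¹ * ∏ i ∈ Finset.range (m + 1), (δ + i)) / t ^ (m+1) * (t / 2 ^ ν / u) := by
            ring
        _ ≤ (δ⁻¹ * ∏ i ∈ Finset.range (m + 1), (δ + i)) / t ^ (m+1) * thetaNu δ ν t := by
            apply mul_le_mul_of_nonneg_left hθ (by positivity)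


end
end
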